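/- If $w \in A_1(\mathbb{R}^n)$ and $w^{1-p'} \in A_{p'/r}(\mathbb{R}^n)$ for some $1 < r < p' < \infty$, then for every cube $Q \subset \mathbb{R}^n$, $\frac{1}{|Q|}\int_Q w^{r\frac{p'-1}{p'-r}}(x)\,dx \leq [w^{1-p'}]_{A_{p'/r}}^{\frac{1}{p'/r - 1}} [w]_{A_1}^{\frac{1}{(p'/r-1)(p-1)}} \left(\operatorname{essinf}_{y \in Q} w(y)\right)^{\frac{p'-1}{p'/r - 1}}.$ -/

import Mathlib

/-! With `σ = w^{1-p'}` and `s = p'/r`, one has `σ^{1-s'} = w^α` for the exponent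
`α = r(p'-1)/(p'-r)`, so the `A_s` condition on `σ` reads `⟨σ⟩_Q ⟨w^α⟩_Q^{s-1} ≤ C₂`.
Jensen's inequality for the convex function `t ↦ t^{1-p'}` gives `⟨w⟩_Q^{1-p'} ≤ ⟨σ⟩_Q`, and the
`A_1` condition gives `⟨w⟩_Q ≤ C₁ essinf_Q w`; together they bound `⟨σ⟩_Q` from below, and
solving for `⟨w^α⟩_Q` gives the claim. If `essinf_Q w = 0`, the `A_1` condition forces `w = 0`
a.e. on `Q`. -/

open MeasureTheory

noncomputable section

/-- The (closed) cube in `ℝⁿ` with center `c` and side length `l`. -/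
def cube {n : ℕ} (c : Fin n → ℝ) (l : ℝ) : Set (Fin n → ℝ) :=
  {x | ∀ i, |x i - c i| ≤ l / 2}

/-- The average `(1/|Q|) ∫_Q f` of a function over a set. -/
def avgI {n : ℕ} (Q : Set (Fin n → ℝ)) (f : (Fin n → ℝ) → ℝ) : ℝ :=
  (volume Q).toReal⁻¹ * ∫ x in Q, f x

/-- `C` is an `A_1` bound for the weight `w`: for every cube `Q`,
`(1/|Q|)∫_Q w ≤ C · essinf_Q w`. -/
def A1Bound {n : ℕ} (w : (Fin n → ℝ) → ℝ) (C : ℝ) : Prop :=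
  ∀ (c : Fin n → ℝ) (l : ℝ), 0 < l →
    avgI (cube c l) w ≤ C * essInf w (volume.restrict (cube c l))

/-- `C` is an `A_s` bound for the weight `w`, `s ∈ (1,∞)`: for every cube `Q`,
`⟨w⟩_Q · ⟨w^{1-s'}⟩_Q^{s-1} ≤ C` where `s' = s/(s-1)`. -/
def ApBound {n : ℕ} (w : (Fin n → ℝ) → ℝ) (s : ℝ) (C : ℝ) : Prop :=
  ∀ (c : Fin n → ℝ) (l : ℝ), 0 < l →
    avgI (cube c l) w *
      (avgI (cube c l) (fun x => w x ^ (1 - s / (s - 1)))) ^ (s - 1) ≤ C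

open Set Filter Real

theorem convexOn_rpow_of_nonpos {p : ℝ} (hp : p ≤ 0) :
    ConvexOn ℝ (Ioi 0) fun x : ℝ ↦ x ^ p := by
  refine MonotoneOn.convexOn_of_deriv (convex_Ioi 0)
    (fun x hx ↦ (continuousAt_rpow_const x p (Or.inl (ne_of_gt hx))).continuousWithinAt)
    (fun x hx ↦ ?_) ?_ <;> rw [interior_Ioi] at *
  · exact (differentiableAt_rpow_const_of_ne p (ne_of_gt hx)).differentiableWithinAt
  · intro x hx y _ hxy
    simp only [Real.deriv_rpow_const]
    exact mul_le_mul_of_nonpos_left (rpow_le_rpow_of_nonpos hx hxy (by linarith)) hp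

theorem essInf_nonneg {α : Type*} [MeasurableSpace α] {μ : Measure α} {f : α → ℝ}
    (hf : 0 ≤ᵐ[μ] f) : 0 ≤ essInf f μ := by
  by_cases h : IsCoboundedUnder (· ≥ ·) (ae μ) f
  · exact le_essInf_of_ae_le 0 hf h
  -- without coboundedness the real `essInf` is the junk value `0`
  · rw [essInf, Real.liminf_of_not_isCoboundedUnder h]

section Average

variable {α : Type*} [MeasurableSpace α] {μ : Measure α} {t : Set α} {f : α → ℝ}

theorem setAverage_nonneg (hf : ∀ x, 0 ≤ f x) : 0 ≤ ⨍ x in t, f x ∂μ := by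
  rw [setAverage_eq]
  exact smul_nonneg (inv_nonneg.2 measureReal_nonneg) (integral_nonneg hf)

theorem le_setAverage_of_ae_le {m : ℝ} (h0 : μ t ≠ 0) (ht : μ t ≠ ⊤)
    (hfm : ∀ᵐ x ∂μ.restrict t, m ≤ f x) (hfi : IntegrableOn f t μ) :
    m ≤ ⨍ x in t, f x ∂μ := by
  have : IsFiniteMeasure (μ.restrict t) := isFiniteMeasure_restrict.mpr ht
  obtain ⟨x, hx, hle⟩ :=
    exists_notMem_null_le_average (by simpa using h0) hfi (ae_iff.1 hfm)
  exact (not_not.1 hx).trans hle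

theorem rpow_setAverage_le_setAverage_rpow {p m : ℝ} (hp : p ≤ 0) (hm : 0 < m)
    (h0 : μ t ≠ 0) (ht : μ t ≠ ⊤) (hfm : ∀ᵐ x ∂μ.restrict t, m ≤ f x)
    (hfi : IntegrableOn f t μ) :
    (⨍ x in t, f x ∂μ) ^ p ≤ ⨍ x in t, f x ^ p ∂μ := by
  have : IsFiniteMeasure (μ.restrict t) := isFiniteMeasure_restrict.mpr ht
  refine ((convexOn_rpow_of_nonpos hp).subset (Ici_subset_Ioi.mpr hm) (convex_Ici m))
    |>.map_set_average_le ?_ isClosed_Ici h0 ht hfm hfi ?_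
  · exact fun x hx ↦ (continuousAt_rpow_const x p
      (Or.inl (ne_of_gt (hm.trans_le hx)))).continuousWithinAt
  · refine Integrable.of_bound (hfi.aemeasurable.pow_const p).aestronglyMeasurable (m ^ p) ?_
    filter_upwards [hfm] with x hx
    rw [Function.comp_apply, norm_of_nonneg (rpow_nonneg (hm.le.trans hx) p)]
    exact rpow_le_rpow_of_nonpos hm hx hp

theorem setAverage_rpow_eq_zero {p : ℝ} (hp : p ≠ 0) (h0 : μ t ≠ 0) (ht : μ t ≠ ⊤)
    (hf : ∀ x, 0 ≤ f x) (hfi : IntegrableOn f t μ) (hf0 : ⨍ x in t, f x ∂μ ≤ 0) :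
    ⨍ x in t, f x ^ p ∂μ = 0 := by
  have hpos : 0 < μ.real t := ENNReal.toReal_pos h0 ht
  have hint : ∫ x in t, f x ∂μ = 0 := by
    rw [setAverage_eq, smul_eq_mul] at hf0
    exact le_antisymm (nonpos_of_mul_nonpos_right hf0 (inv_pos.2 hpos)) (integral_nonneg hf)
  have hfz : f =ᵐ[μ.restrict t] 0 := (integral_eq_zero_iff_of_nonneg hf hfi).1 hint
  have : (fun x ↦ f x ^ p) =ᵐ[μ.restrict t] 0 := by
    filter_upwards [hfz] with x hx
    simp [hx, zero_rpow hp]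
  simp [average_congr this]

end Average

theorem le_rpow_mul_rpow_mul_rpow_of_mul_rpow_le {A B T m C₁ C₂ a s : ℝ} (ha : 0 ≤ a)
    (hs : 1 < s) (hA : 0 < A) (hm : 0 ≤ m) (hT : 0 ≤ T) (hA₁ : A ≤ C₁ * m)
    (hAB : A ^ (-a) ≤ B) (hBT : B * T ^ (s - 1) ≤ C₂) :
    T ≤ C₂ ^ (1 / (s - 1)) * C₁ ^ (a / (s - 1)) * m ^ (a / (s - 1)) := by
  have hC₁m : 0 < C₁ * m := hA.trans_le hA₁
  have hC₁ : 0 ≤ C₁ := (pos_of_mul_pos_left hC₁m hm).le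
  have hB : ((C₁ * m) ^ a)⁻¹ ≤ B := by
    rw [← rpow_neg hC₁m.le]
    exact (rpow_le_rpow_of_nonpos hA hA₁ (neg_nonpos.2 ha)).trans hAB
  have hBT' : ((C₁ * m) ^ a)⁻¹ * T ^ (s - 1) ≤ C₂ :=
    (mul_le_mul_of_nonneg_right hB (rpow_nonneg hT _)).trans hBT
  have hC₂ : 0 ≤ C₂ := (by positivity : (0 : ℝ) ≤ _).trans hBT'
  have hTs : T ^ (s - 1) ≤ (C₁ * m) ^ a * C₂ :=
    (inv_mul_le_iff₀ (rpow_pos_of_pos hC₁m a)).1 hBT'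
  have hs₀ : 0 < s - 1 := sub_pos.2 hs
  calc T = (T ^ (s - 1)) ^ (1 / (s - 1)) := by
        rw [← rpow_mul hT, mul_one_div_cancel hs₀.ne', rpow_one]
    _ ≤ ((C₁ * m) ^ a * C₂) ^ (1 / (s - 1)) :=
        rpow_le_rpow (rpow_nonneg hT _) hTs (one_div_nonneg.2 hs₀.le)
    _ = C₂ ^ (1 / (s - 1)) * C₁ ^ (a / (s - 1)) * m ^ (a / (s - 1)) := by
        rw [mul_rpow (rpow_nonneg hC₁m.le a) hC₂, ← rpow_mul hC₁m.le, mul_rpow hC₁ hm,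
          mul_one_div]
        ring

theorem cube_eq_pi {n : ℕ} (c : Fin n → ℝ) (l : ℝ) :
    cube c l = univ.pi fun i ↦ Icc (c i - l / 2) (c i + l / 2) := by
  ext x
  simp only [cube, mem_ofPred_eq, mem_univ_pi, mem_Icc, abs_le]
  exact forall_congr' fun i ↦ by constructor <;> rintro ⟨h₁, h₂⟩ <;> constructor <;> linarith

theorem isCompact_cube {n : ℕ} (c : Fin n → ℝ) (l : ℝ) : IsCompact (cube c l) := by
  rw [cube_eq_pi]
  exact isCompact_univ_pi fun _ ↦ isCompact_Icc

theorem volume_cube {n : ℕ} (c : Fin n → ℝ) (l : ℝ) :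
    volume (cube c l) = ENNReal.ofReal l ^ n := by
  rw [cube_eq_pi, volume_pi_pi]
  simp [Real.volume_Icc]

theorem volume_cube_ne_zero {n : ℕ} (c : Fin n → ℝ) {l : ℝ} (hl : 0 < l) :
    volume (cube c l) ≠ 0 := by
  simp [volume_cube, hl]

theorem volume_cube_ne_top {n : ℕ} (c : Fin n → ℝ) (l : ℝ) : volume (cube c l) ≠ ⊤ := by
  simp [volume_cube]

theorem avgI_eq_setAverage {n : ℕ} (Q : Set (Fin n → ℝ)) (f : (Fin n → ℝ) → ℝ) :
    avgI Q f = ⨍ x in Q, f x := by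
  rw [setAverage_eq, smul_eq_mul]
  rfl

/-- If `w ∈ A_1` with constant `C₁` and `w^{1-p'} ∈ A_{p'/r}` with constant `C₂`,
where `1 < r < p' < ∞` and `p' = p/(p-1)`, then for every cube `Q`,
`⟨w^{r(p'-1)/(p'-r)}⟩_Q ≤ C₂^{1/(p'/r-1)} C₁^{1/((p'/r-1)(p-1))}
(essinf_Q w)^{(p'-1)/(p'/r-1)}`. -/
theorem avg_rpow_le_of_a1_and_dual_ap {n : ℕ} (w : (Fin n → ℝ) → ℝ) (r p C₁ C₂ : ℝ)
    (hw : ∀ x, 0 ≤ w x) (hwloc : MeasureTheory.LocallyIntegrable w)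
    (hr : 1 < r) (hp : 1 < p) (hrp : r < p / (p - 1))
    (h1 : A1Bound w C₁)
    (h2 : ApBound (fun x => w x ^ (1 - p / (p - 1))) (p / (p - 1) / r) C₂) :
    ∀ (c : Fin n → ℝ) (l : ℝ), 0 < l →
      avgI (cube c l)
          (fun x => w x ^ (r * (p / (p - 1) - 1) / (p / (p - 1) - r))) ≤
        C₂ ^ (1 / (p / (p - 1) / r - 1)) *
          C₁ ^ (1 / ((p / (p - 1) / r - 1) * (p - 1))) *
          (essInf w (volume.restrict (cube c l))) ^
            ((p / (p - 1) - 1) / (p / (p - 1) / r - 1)) := by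
  intro c l hl
  set P := p / (p - 1) with hP
  have hr₀ : 0 < r := by linarith
  have hp₁ : p - 1 ≠ 0 := by linarith
  have hP₁ : 0 < P - 1 := by linarith
  have hs : 1 < P / r := (one_lt_div hr₀).2 hrp
  have hQ₀ := volume_cube_ne_zero c hl
  have hQ := volume_cube_ne_top c l
  have hwQ : IntegrableOn w (cube c l) := hwloc.integrableOn_isCompact (isCompact_cube c l)
  have hσ : (1 - P) * (1 - P / r / (P / r - 1)) = r * (P - 1) / (P - r) := by
    field_simp [sub_ne_zero.2 hrp.ne']; ring
  have hC₁ : 1 / ((P / r - 1) * (p - 1)) = (P - 1) / (P / r - 1) := by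
    rw [hP]; field_simp; ring
  have H1 := h1 c l hl
  have H2 := h2 c l hl
  simp only [avgI_eq_setAverage, ← rpow_mul (hw _), hσ] at H1 H2 ⊢
  set m := essInf w (volume.restrict (cube c l))
  have hm₀ : 0 ≤ m := essInf_nonneg (ae_of_all _ hw)
  obtain hm | hm := hm₀.eq_or_lt
  · rw [← hm, mul_zero] at H1
    rw [setAverage_rpow_eq_zero (div_pos (mul_pos hr₀ hP₁) (sub_pos.2 hrp)).ne' hQ₀ hQ hw hwQ H1,
      ← hm, zero_rpow (div_pos hP₁ (sub_pos.2 hs)).ne', mul_zero]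
  · have hwm : ∀ᵐ x ∂volume.restrict (cube c l), m ≤ w x :=
      ae_essInf_le (isBoundedUnder_of ⟨0, hw⟩)
    rw [hC₁]
    refine le_rpow_mul_rpow_mul_rpow_of_mul_rpow_le (a := P - 1) hP₁.le hs
      (hm.trans_le (le_setAverage_of_ae_le hQ₀ hQ hwm hwQ)) hm.le
      (setAverage_nonneg fun x ↦ rpow_nonneg (hw x) _) H1 ?_ H2
    rw [neg_sub]
    exact rpow_setAverage_le_setAverage_rpow (by linarith) hm hQ₀ hQ hwm hwQ
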